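/- arXiv:2401.15887 — 2 statements merged into one kernel-verified Lean document; each statement's English description precedes it below -/
import Mathlib

section
/- Let L = Σ_{i=0}^J a_i(n)σ^i be a nonzero operator with polynomial coefficients over a field K of characteristic 0. Then the continued zero index of L satisfies C_L ≤ J; that is, there exists c with 0 ≤ c ≤ J such that L*(n^c) ≠ 0, and the least such c is at most J. -/
open Polynomial Finset

/-- The polynomials `b_k(n) = ∑_{j=k}^J binom(j,k) a_{J-j}(n+j-J)` attached to the
operator `L = ∑_{i=0}^J a_i(n) σ^i`. -/
noncomputable def bPoly {K : Type*} [Field K] (J : ℕ) (a : ℕ → K[X]) (k : ℕ) : K[X] :=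
  ∑ j ∈ Finset.Icc k J, (j.choose k : K) • (a (J - j)).comp (X + C ((j : K) - (J : K)))

/-- The degree of the operator `L = ∑_{i=0}^J a_i(n) σ^i`:
`deg L = max_{0 ≤ k ≤ J} (deg b_k(n) - k)`, an element of `WithBot ℤ`
(the zero polynomial having degree `⊥ = -∞`). -/
noncomputable def opDegree {K : Type*} [Field K] (J : ℕ) (a : ℕ → K[X]) : WithBot ℤ :=
  (Finset.range (J + 1)).sup fun k =>
    WithBot.map (fun d : ℕ => (d : ℤ) - (k : ℤ)) (bPoly J a k).degree

/-- The adjoint `L*` applied to a polynomial `x`: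
`L*(x)(n) = ∑_{i=0}^J a_i(n-i) x(n-i)`. -/
noncomputable def adjointApply {K : Type*} [Field K] (J : ℕ) (a : ℕ → K[X]) (x : K[X]) : K[X] :=
  ∑ i ∈ Finset.range (J + 1), ((a i).comp (X - C (i : K))) * (x.comp (X - C (i : K)))

/-- The continued zero index `C_L`: the least `c ∈ ℕ` with `L*(n^c) ≠ 0`. -/
noncomputable def contZeroIndex {K : Type*} [Field K] (J : ℕ) (a : ℕ → K[X]) : ℕ :=
  sInf {c : ℕ | adjointApply J a (X ^ c) ≠ 0}

/-- The operator `L = ∑_{i=0}^J a_i(n) σ^i` annihilates the sequence `F` if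
`∑_{i=0}^J a_i(n) F(n+i) = 0` for all `n ∈ ℕ`. -/
def Annihilates {K : Type*} [Field K] (J : ℕ) (a : ℕ → K[X]) (F : ℕ → K) : Prop :=
  ∀ n : ℕ, ∑ i ∈ Finset.range (J + 1), (a i).eval (n : K) * F (n + i) = 0

/-- `F` is holonomic: it admits a nonzero annihilating operator. -/
def Holonomic {K : Type*} [Field K] (F : ℕ → K) : Prop :=
  ∃ (J : ℕ) (a : ℕ → K[X]), (∃ i ≤ J, a i ≠ 0) ∧ Annihilates J a F

/-- `F` has order `J`: `J` is the minimal order of a nonzero annihilator of `F`. -/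
def HasOrder {K : Type*} [Field K] (F : ℕ → K) (J : ℕ) : Prop :=
  (∃ a : ℕ → K[X], (∃ i ≤ J, a i ≠ 0) ∧ Annihilates J a F) ∧
    ∀ J' < J, ∀ a : ℕ → K[X], (∃ i ≤ J', a i ≠ 0) → ¬ Annihilates J' a F

/-- `(num(n)/den(n))·F(n)` is summable: there are rational functions
`u_i = u i / v i`, `0 ≤ i ≤ J-1`, such that
`num(n)/den(n) · F(n) = ∑_i u_i(n+1) F(n+1+i) - ∑_i u_i(n) F(n+i)`
for all `n` at which all rational functions involved are defined. -/
def IsSummableRat {K : Type*} [Field K] (J : ℕ) (F : ℕ → K) (num den : K[X]) : Prop :=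
  ∃ u v : ℕ → K[X], (∀ i < J, v i ≠ 0) ∧ ∀ n : ℕ,
    den.eval (n : K) ≠ 0 →
    (∀ i < J, (v i).eval (n : K) ≠ 0 ∧ (v i).eval ((n : K) + 1) ≠ 0) →
    num.eval (n : K) / den.eval (n : K) * F n =
      (∑ i ∈ Finset.range J,
          (u i).eval ((n : K) + 1) / (v i).eval ((n : K) + 1) * F (n + 1 + i)) -
        ∑ i ∈ Finset.range J, (u i).eval (n : K) / (v i).eval (n : K) * F (n + i)

/-- The coefficient of `n^m` in a polynomial, for an integer index `m`
(zero for negative `m`). -/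
noncomputable def coeffZ {K : Type*} [Field K] (b : K[X]) (m : ℤ) : K :=
  if 0 ≤ m then b.coeff m.toNat else 0

/-- The value `f(s) = ∑_{k=0}^J [n^{d+k}](b_k(n)) · s(s-1)⋯(s-k+1)`, where `d = deg L`. -/
noncomputable def fVal {K : Type*} [Field K] (J : ℕ) (a : ℕ → K[X]) (s : ℕ) : K :=
  ∑ k ∈ Finset.range (J + 1),
    coeffZ (bPoly J a k) (WithBot.unbotD 0 (opDegree J a) + (k : ℤ)) *
      ∏ j ∈ Finset.range k, ((s : K) - (j : K))

/-- `L` is nondegenerated if `f(s)` has no root in `ℕ`. -/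
def Nondegenerated {K : Type*} [Field K] (J : ℕ) (a : ℕ → K[X]) : Prop :=
  ∀ s : ℕ, fVal J a s ≠ 0

/-- `d_L = max_{0 ≤ i ≤ J} deg a_i(n)`. -/
noncomputable def dLdeg {K : Type*} [Field K] (J : ℕ) (a : ℕ → K[X]) : ℕ :=
  (Finset.range (J + 1)).sup fun i => (a i).natDegree

/-! If `L*(n^c) = 0` for every `c ≤ J`, then at any point `s` the values `a_i(s - i)`,
`0 ≤ i ≤ J`, solve the homogeneous Vandermonde system `∑_i a_i(s - i) (s - i)^c = 0`,
`0 ≤ c ≤ J`, whose `J + 1` nodes `s - i` are distinct in characteristic `0`. Hence all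
`a_i(s - i)` vanish for every `s`, i.e. `L = 0`. -/

theorem eval_adjointApply_X_pow {K : Type*} [Field K] (J : ℕ) (a : ℕ → K[X]) (c : ℕ) (s : K) :
    (adjointApply J a (X ^ c)).eval s =
      ∑ i ∈ range (J + 1), (a i).eval (s - i) * (s - i) ^ c := by
  simp [adjointApply, eval_finsetSum]

theorem eval_sub_natCast_eq_zero_of_adjointApply_X_pow_eq_zero {K : Type*} [Field K]
    [CharZero K] {J : ℕ} {a : ℕ → K[X]} (h : ∀ c ≤ J, adjointApply J a (X ^ c) = 0) (s : K)
    {i : ℕ} (hi : i ≤ J) : (a i).eval (s - i) = 0 := by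
  let node : Fin (J + 1) → K := fun j => s - (j : ℕ)
  have node_injective : Function.Injective node := fun j k hjk => by
    simpa [node, Fin.ext_iff] using hjk
  have system :
      ∀ c : Fin (J + 1), ∑ j : Fin (J + 1), (a j).eval (node j) * node j ^ (c : ℕ) = 0 := by
    intro c
    rw [Fin.sum_univ_eq_sum_range (fun j => (a j).eval (s - j) * (s - j) ^ (c : ℕ)),
      ← eval_adjointApply_X_pow, h c (Nat.le_of_lt_succ c.isLt), eval_zero]
  exact congrFun (Matrix.eq_zero_of_forall_pow_sum_mul_pow_eq_zero node_injective system)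
    ⟨i, Nat.lt_succ_of_le hi⟩

theorem eq_zero_of_adjointApply_X_pow_eq_zero {K : Type*} [Field K] [CharZero K] {J : ℕ}
    {a : ℕ → K[X]} (h : ∀ c ≤ J, adjointApply J a (X ^ c) = 0) {i : ℕ} (hi : i ≤ J) :
    a i = 0 :=
  Polynomial.funext fun t => by
    simpa using eval_sub_natCast_eq_zero_of_adjointApply_X_pow_eq_zero h (t + i) hi

/-- For a nonzero operator `L = ∑_{i=0}^J a_i(n) σ^i`, the continued zero
index satisfies `C_L ≤ J`: there is some `c ≤ J` with `L*(n^c) ≠ 0`, and the least such `c`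
is at most `J`. -/
theorem contZeroIndex_le_order {K : Type*} [Field K] [CharZero K]
    (J : ℕ) (a : ℕ → K[X]) (hL : ∃ i ≤ J, a i ≠ 0) :
    (∃ c ≤ J, adjointApply J a (X ^ c) ≠ 0) ∧ contZeroIndex J a ≤ J := by
  obtain ⟨c, hc, hne⟩ : ∃ c ≤ J, adjointApply J a (X ^ c) ≠ 0 := by
    by_contra! h
    obtain ⟨i, hi, hai⟩ := hL
    exact hai (eq_zero_of_adjointApply_X_pow_eq_zero h hi)
  exact ⟨⟨c, hc, hne⟩, (Nat.sInf_le hne).trans hc⟩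
end

section
/- Let F : ℕ → K be a holonomic sequence of order J > 0 over a field K of characteristic 0 and let L = Σ_{i=0}^J a_i(n)σ^i be an annihilator of F of order J with a_0(n)a_J(n) ≠ 0. Let a(n), b(n) ∈ K[n] with gcd(a(n), b(n)) = 1 be such that (a(n)/b(n))·F(n) is summable. Suppose that for every h ∈ ℕ one has gcd(a_0(n), a_J(n+h)) = 1, gcd(b(n), b(n+J+h)) = 1, gcd(a_0(n), b(n+J+h)) = 1 and gcd(b(n), a_J(n+h)) = 1. Then b(n) divides a(n) in K[n] (so b(n) is a nonzero constant). -/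
open Polynomial Finset

/-!
Eliminating `σ^J F` from the summability certificate by means of `L`, minimality of the order
forces every coefficient of the resulting relation among `F, σF, …, σ^{J-1}F` to vanish.
Telescoping these coefficient identities gives, with `W` the last certificate coefficient,
`a/b + ∑_{k=0}^{J} W(n+1-k) A_k(n-k) / A_J(n-k) = 0`, i.e. `a/b = -L*(y)` for
`y(n) = W(n+1)/A_J(n)`. If an irreducible `q` divided `b`, compare valuations at the shifts
`q(n+m)`, `m ∈ ℤ`: in a vanishing sum the least valuation is attained twice. Following the
leftmost and rightmost poles of `W` along this orbit, the gcd conditions leave no room for a pole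
of `W`, and then none for a pole of `a/b`.
-/

open Filter

namespace RatFunc

variable {K : Type*} [Field K]

noncomputable def shift (c : K) : RatFunc K →ₐ[K] RatFunc K :=
  mapAlgHom (taylorAlgHom c) <|
    nonZeroDivisors_le_comap_nonZeroDivisors_of_injective _ (taylorEquiv c).injective

theorem shift_div (c : K) (p q : K[X]) :
    shift c (algebraMap K[X] (RatFunc K) p / algebraMap K[X] (RatFunc K) q) =
      algebraMap K[X] (RatFunc K) (taylor c p) / algebraMap K[X] (RatFunc K) (taylor c q) := by
  rw [shift, coe_mapAlgHom_eq_coe_map, map_apply_div]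
  rfl

theorem shift_shift (c d : K) (x : RatFunc K) : shift c (shift d x) = shift (c + d) x := by
  obtain ⟨p, q, -, rfl⟩ := IsFractionRing.div_surjective (A := K[X]) x
  simp only [shift_div, taylor_taylor]

theorem shift_zero (x : RatFunc K) : shift 0 x = x := by
  obtain ⟨p, q, -, rfl⟩ := IsFractionRing.div_surjective (A := K[X]) x
  simp only [shift_div, taylor_zero]

end RatFunc

theorem Filter.Germ.coe_finset_sum {α β ι : Type*} {l : Filter α} [AddCommMonoid β]
    (s : Finset ι) (f : ι → α → β) :
    ((fun x => ∑ i ∈ s, f i x : α → β) : Germ l β) = ∑ i ∈ s, (f i : Germ l β) := by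
  simpa [Finset.sum_fn] using map_sum (Germ.coeAddHom l) f s

section Germ

variable {K : Type*} [Field K]

def shiftGerm (F : ℕ → K) (i : ℕ) : Germ (atTop : Filter ℕ) K :=
  ((fun n => F (n + i) : ℕ → K) : Germ atTop K)

noncomputable def Polynomial.evalGerm : K[X] →+* Germ (atTop : Filter ℕ) K :=
  (Germ.coeRingHom atTop).comp (RingHom.pi fun n : ℕ => evalRingHom (n : K))

theorem Polynomial.evalGerm_apply (p : K[X]) :
    p.evalGerm = ((fun n : ℕ => p.eval (n : K)) : Germ atTop K) := rfl

variable [CharZero K]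

theorem Polynomial.eventually_eval_natCast_ne_zero {p : K[X]} (hp : p ≠ 0) :
    ∀ᶠ n : ℕ in atTop, p.eval (n : K) ≠ 0 := by
  rw [← Nat.cofinite_eq_atTop]
  exact ((finite_setOfPred_isRoot hp).preimage Nat.cast_injective.injOn).eventually_cofinite_notMem

theorem Polynomial.isUnit_evalGerm {p : K[X]} (hp : p ≠ 0) : IsUnit p.evalGerm := by
  refine IsUnit.of_mul_eq_one ((fun n : ℕ => (p.eval (n : K))⁻¹ : ℕ → K) : Germ atTop K) ?_
  rw [evalGerm_apply, ← Germ.coe_mul, ← Germ.coe_one, Germ.coe_eq]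
  exact (eventually_eval_natCast_ne_zero hp).mono fun n hn => mul_inv_cancel₀ hn

/-- `x ↦ (n ↦ x(n))`: a rational function has a value at all but finitely many `n`, so it defines
a germ at infinity. -/
noncomputable def RatFunc.evalGerm : RatFunc K →+* Germ (atTop : Filter ℕ) K :=
  IsLocalization.lift (M := nonZeroDivisors K[X]) fun q =>
    isUnit_evalGerm (nonZeroDivisors.ne_zero q.2)

theorem RatFunc.evalGerm_algebraMap (p : K[X]) :
    evalGerm (algebraMap K[X] (RatFunc K) p) = p.evalGerm :=
  IsLocalization.lift_eq _ p

theorem RatFunc.evalGerm_div (p : K[X]) {q : K[X]} (hq : q ≠ 0) :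
    evalGerm (algebraMap K[X] (RatFunc K) p / algebraMap K[X] (RatFunc K) q) =
      ((fun n : ℕ => p.eval (n : K) / q.eval (n : K)) : Germ atTop K) := by
  refine (isUnit_evalGerm hq).mul_right_cancel ((?_ : _ = p.evalGerm).trans (?_ : _ = _).symm)
  · rw [← evalGerm_algebraMap, ← evalGerm_algebraMap, ← map_mul, div_mul_cancel₀ _
      ((map_ne_zero_iff _ (IsFractionRing.injective K[X] (RatFunc K))).2 hq)]
  · rw [evalGerm_apply, evalGerm_apply, ← Germ.coe_mul, Germ.coe_eq]
    exact (eventually_eval_natCast_ne_zero hq).mono fun n hn => div_mul_cancel₀ _ hn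

end Germ

section Order

variable {K : Type*} [Field K] {F : ℕ → K} {J : ℕ}

theorem HasOrder.eq_zero_of_eventually_sum_eq_zero (hord : HasOrder F J) {c : ℕ → K[X]}
    (h : ∀ᶠ n : ℕ in atTop, ∑ i ∈ range J, (c i).eval (n : K) * F (n + i) = 0) {i : ℕ}
    (hi : i < J) : c i = 0 := by
  obtain ⟨N, hN⟩ := eventually_atTop.1 h
  set m : K[X] := ∏ t ∈ range N, (X - C (t : K))
  have hm : m ≠ 0 := prod_ne_zero_iff.2 fun t _ => X_sub_C_ne_zero (t : K)
  have hann : Annihilates (J - 1) (fun i => m * c i) F := by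
    intro n
    simp only [Nat.sub_add_cancel (Nat.one_le_of_lt hi), eval_mul, mul_assoc, ← mul_sum]
    rcases lt_or_ge n N with hn | hn
    · refine mul_eq_zero_of_left ?_ _
      simp only [m, eval_prod, eval_sub, eval_X, eval_C]
      exact prod_eq_zero (mem_range.2 hn) (sub_self _)
    · exact mul_eq_zero_of_right _ (hN n hn)
  by_contra hc
  exact hord.2 (J - 1) (by omega) _ ⟨i, by omega, mul_ne_zero hm hc⟩ hann

theorem HasOrder.eq_zero_of_sum_evalGerm_mul_eq_zero [CharZero K] (hord : HasOrder F J)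
    {c : ℕ → RatFunc K} (h : ∑ i ∈ range J, RatFunc.evalGerm (c i) * shiftGerm F i = 0)
    {i : ℕ} (hi : i < J) : c i = 0 := by
  choose p q hq hc using fun i => IsFractionRing.div_surjective (A := K[X]) (c i)
  have hq0 : ∀ j, q j ≠ 0 := fun j => nonZeroDivisors.ne_zero (hq j)
  have hcD : ∀ j ∈ range J, RatFunc.evalGerm (c j) * (∏ k ∈ range J, q k).evalGerm =
      (p j * ∏ k ∈ (range J).erase j, q k).evalGerm := by
    intro j hj
    rw [← RatFunc.evalGerm_algebraMap, ← RatFunc.evalGerm_algebraMap, ← map_mul, ← hc j,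
      ← mul_prod_erase _ _ hj]
    have := (map_ne_zero_iff _ (IsFractionRing.injective K[X] (RatFunc K))).2 (hq0 j)
    congr 1
    rw [map_mul, map_mul]
    field_simp
  have hd := hord.eq_zero_of_eventually_sum_eq_zero
    (c := fun j => p j * ∏ k ∈ (range J).erase j, q k) ?_ hi
  · rw [← hc i, (mul_eq_zero.1 hd).resolve_right (prod_ne_zero_iff.2 fun k _ => hq0 k), map_zero,
      zero_div]
  · have := congrArg (· * (∏ k ∈ range J, q k).evalGerm) h
    simp only [zero_mul, sum_mul, mul_right_comm _ (shiftGerm F _)] at this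
    rw [sum_congr rfl fun j hj => by rw [hcD j hj]] at this
    simp only [evalGerm_apply, shiftGerm, ← Germ.coe_mul, ← Germ.coe_finset_sum] at this
    exact Germ.coe_eq.1 this

end Order

section Telescoping

variable {R : Type*} [CommRing R]

/-- The coefficient of `σ^i F` in `r F - (σ(∑ U_i σ^i F) - ∑ U_i σ^i F)` once `σ^{J+1} F` is
eliminated through `∑ ρ_i σ^i F = 0`, `ρ_{J+1} = 1`; here `U'` stands for `σ U`. -/
def reducedCoeff (J : ℕ) (r : R) (U U' ρ : ℕ → R) : ℕ → R
  | 0 => r + U 0 + U' J * ρ 0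
  | i + 1 => U (i + 1) - U' i + U' J * ρ (i + 1)

theorem RingHom.map_reducedCoeff {S : Type*} [CommRing S] (f : R →+* S) (J : ℕ)
    (r : R) (U U' ρ : ℕ → R) (i : ℕ) :
    f (reducedCoeff J r U U' ρ i) = reducedCoeff J (f r) (f ∘ U) (f ∘ U') (f ∘ ρ) i := by
  cases i <;> simp [reducedCoeff]

theorem sum_reducedCoeff_mul (J : ℕ) (r : R) (U U' ρ f : ℕ → R) (hρ : ρ (J + 1) = 1) :
    ∑ i ∈ range (J + 1), reducedCoeff J r U U' ρ i * f i =
      r * f 0 - (∑ i ∈ range (J + 1), U' i * f (i + 1) - ∑ i ∈ range (J + 1), U i * f i) +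
        U' J * ∑ i ∈ range (J + 2), ρ i * f i := by
  rw [sum_range_succ (fun i => U' i * f (i + 1)), sum_range_succ (fun i => ρ i * f i), hρ,
    sum_range_succ', sum_range_succ' (fun i => U i * f i), sum_range_succ' (fun i => ρ i * f i)]
  simp only [reducedCoeff, sub_mul, add_mul, mul_add, sum_add_distrib, sum_sub_distrib, mul_sum,
    mul_assoc]
  ring

theorem add_sum_shift_eq_zero (τ : ℤ → R →+* R) (hτ₀ : ∀ x, τ 0 x = x)
    (hτ : ∀ c d x, τ c (τ d x) = τ (c + d) x) {J : ℕ} {r : R} {U ρ : ℕ → R}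
    (hρ : ρ (J + 1) = 1) (hc : ∀ i ≤ J, reducedCoeff J r U (fun i => τ 1 (U i)) ρ i = 0) :
    r + ∑ k ∈ range (J + 2), τ (-k) (τ 1 (U J) * ρ k) = 0 := by
  have key : ∀ l ≤ J, τ (-l) (U l) = -r - ∑ k ∈ range (l + 1), τ (-k) (τ 1 (U J) * ρ k) := by
    intro l
    induction l with
    | zero =>
      intro _
      have h := hc 0 (Nat.zero_le _)
      simp only [reducedCoeff] at h
      simp only [zero_add, sum_range_one, Nat.cast_zero, neg_zero, hτ₀]
      linear_combination h
    | succ l ih =>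
      intro hl
      have h := congrArg (τ (-(l + 1))) (hc (l + 1) hl)
      simp only [reducedCoeff, map_add, map_sub, map_mul, map_zero, hτ] at h
      rw [sum_range_succ, sub_add_eq_sub_sub, ← ih (by omega), show -(l : ℤ) = -(l + 1) + 1 by ring]
      push_cast
      simp only [map_mul, hτ]
      linear_combination h
  rw [sum_range_succ, hρ, mul_one, hτ, show -((J + 1 : ℕ) : ℤ) + 1 = -(J : ℤ) by push_cast; ring]
  linear_combination key J le_rfl

end Telescoping

section Adjoint

variable {K : Type*} [Field K] [CharZero K] {F : ℕ → K} {J : ℕ}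

local notation "Φ" => algebraMap K[X] (RatFunc K)

theorem IsSummableRat.exists_germ_eq {a b : K[X]} (h : IsSummableRat J F a b) (hb : b ≠ 0) :
    ∃ U : ℕ → RatFunc K, RatFunc.evalGerm (Φ a / Φ b) * shiftGerm F 0 =
      ∑ i ∈ range J, RatFunc.evalGerm (RatFunc.shift 1 (U i)) * shiftGerm F (i + 1) -
        ∑ i ∈ range J, RatFunc.evalGerm (U i) * shiftGerm F i := by
  obtain ⟨u, v, hv, h⟩ := h
  refine ⟨fun i => Φ (u i) / Φ (v i), ?_⟩
  have hv' : ∀ i ∈ range J, v i ≠ 0 := fun i hi => hv i (mem_range.1 hi)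
  have h₀ : RatFunc.evalGerm (Φ a / Φ b) * shiftGerm F 0 =
      ((fun n : ℕ => a.eval (n : K) / b.eval (n : K) * F n : ℕ → K) : Germ atTop K) := by
    rw [RatFunc.evalGerm_div _ hb, shiftGerm, ← Germ.coe_mul]
    rfl
  have h₁ : ∑ i ∈ range J, RatFunc.evalGerm (RatFunc.shift 1 (Φ (u i) / Φ (v i))) *
      shiftGerm F (i + 1) = ((fun n : ℕ => ∑ i ∈ range J, (u i).eval ((n : K) + 1) /
        (v i).eval ((n : K) + 1) * F (n + 1 + i) : ℕ → K) : Germ atTop K) := by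
    rw [Germ.coe_finset_sum]
    refine sum_congr rfl fun i hi => ?_
    rw [RatFunc.shift_div, RatFunc.evalGerm_div _ ((taylor_eq_zero _ _).not.2 (hv' i hi)),
      shiftGerm, ← Germ.coe_mul]
    simp only [taylor_eval, add_assoc, add_comm 1 i]
    rfl
  have h₂ : ∑ i ∈ range J, RatFunc.evalGerm (Φ (u i) / Φ (v i)) * shiftGerm F i =
      ((fun n : ℕ => ∑ i ∈ range J, (u i).eval (n : K) / (v i).eval (n : K) * F (n + i) :
        ℕ → K) : Germ atTop K) := by
    rw [Germ.coe_finset_sum]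
    refine sum_congr rfl fun i hi => ?_
    rw [RatFunc.evalGerm_div _ (hv' i hi), shiftGerm, ← Germ.coe_mul]
    rfl
  rw [h₀, h₁, h₂, ← Germ.coe_sub, Germ.coe_eq]
  have hvn : ∀ᶠ n : ℕ in atTop,
      ∀ i ∈ range J, (v i).eval (n : K) ≠ 0 ∧ (v i).eval ((n : K) + 1) ≠ 0 :=
    (eventually_all_finset _).2 fun i hi => (eventually_eval_natCast_ne_zero (hv' i hi)).and <|
      (eventually_eval_natCast_ne_zero ((taylor_eq_zero _ _).not.2 (hv' i hi))).mono
        fun n hn => by rwa [taylor_eval] at hn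
  filter_upwards [eventually_eval_natCast_ne_zero hb, hvn] with n hbn hvn
  exact h n hbn fun i hi => hvn i (mem_range.2 hi)

variable {A : ℕ → K[X]} {r : RatFunc K} {U : ℕ → RatFunc K}

theorem reducedCoeff_eq_zero (hord : HasOrder F (J + 1)) (hann : Annihilates (J + 1) A F)
    (hAJ : A (J + 1) ≠ 0)
    (hsum : RatFunc.evalGerm r * shiftGerm F 0 =
      ∑ i ∈ range (J + 1), RatFunc.evalGerm (RatFunc.shift 1 (U i)) * shiftGerm F (i + 1) -
        ∑ i ∈ range (J + 1), RatFunc.evalGerm (U i) * shiftGerm F i) {i : ℕ} (hi : i ≤ J) :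
    reducedCoeff J r U (fun i => RatFunc.shift 1 (U i)) (fun i => Φ (A i) / Φ (A (J + 1))) i =
      0 := by
  refine hord.eq_zero_of_sum_evalGerm_mul_eq_zero ?_ (Nat.lt_succ_of_le hi)
  have hAJ' : Φ (A (J + 1)) ≠ 0 := (map_ne_zero_iff _ (IsFractionRing.injective _ _)).2 hAJ
  have hann' :
      ∑ i ∈ range (J + 2), RatFunc.evalGerm (Φ (A i) / Φ (A (J + 1))) * shiftGerm F i = 0 := by
    simp only [div_eq_mul_inv, map_mul, mul_right_comm _ (RatFunc.evalGerm _), ← sum_mul,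
      RatFunc.evalGerm_algebraMap, evalGerm_apply, shiftGerm, ← Germ.coe_mul,
      ← Germ.coe_finset_sum]
    convert zero_mul _
    exact Germ.coe_eq.2 (Eventually.of_forall hann)
  simp only [RingHom.map_reducedCoeff]
  rw [sum_reducedCoeff_mul _ _ _ _ _ _ (by simp [div_self hAJ'])]
  simp only [Function.comp_apply, hsum, sub_self, hann', mul_zero, add_zero]

/-- The rational function `r` is `-L*(y)` for `y(n) = W(n+1)/A_J(n)`, `W = U J`, where `L*` is
the adjoint of `L`. -/
theorem add_sum_adjoint_eq_zero (hord : HasOrder F (J + 1)) (hann : Annihilates (J + 1) A F)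
    (hAJ : A (J + 1) ≠ 0)
    (hsum : RatFunc.evalGerm r * shiftGerm F 0 =
      ∑ i ∈ range (J + 1), RatFunc.evalGerm (RatFunc.shift 1 (U i)) * shiftGerm F (i + 1) -
        ∑ i ∈ range (J + 1), RatFunc.evalGerm (U i) * shiftGerm F i) :
    r + ∑ k ∈ range (J + 2), RatFunc.shift ((1 - k : ℤ) : K) (U J) *
      (Φ (taylor ((-k : ℤ) : K) (A k)) / Φ (taylor ((-k : ℤ) : K) (A (J + 1)))) = 0 := by
  have h := add_sum_shift_eq_zero (fun c : ℤ => (RatFunc.shift (c : K)).toRingHom)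
    (fun x => by simpa using RatFunc.shift_zero x)
    (fun c d x => by simpa using RatFunc.shift_shift (c : K) d x) (r := r) (U := U)
    (ρ := fun i => Φ (A i) / Φ (A (J + 1)))
    (div_self ((map_ne_zero_iff _ (IsFractionRing.injective _ _)).2 hAJ))
    fun i hi => by simpa using reducedCoeff_eq_zero hord hann hAJ hsum hi
  convert h using 3 with k
  simp only [AlgHom.toRingHom_eq_coe, RingHom.coe_coe, map_mul, RatFunc.shift_shift,
    RatFunc.shift_div]
  push_cast
  ring_nf

end Adjoint

section Multiplicity

variable {R : Type*} [CommRing R] [IsDomain R] [WfDvdMonoid R]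

theorem multiplicity_prod_of_ne_zero {ι : Type*} {p : R} (hp : Prime p) (s : Finset ι)
    {f : ι → R} (hf : ∀ i ∈ s, f i ≠ 0) :
    multiplicity p (∏ i ∈ s, f i) = ∑ i ∈ s, multiplicity p (f i) := by
  have h := Finset.emultiplicity_prod hp s f
  rw [(FiniteMultiplicity.of_not_isUnit hp.not_isUnit (prod_ne_zero_iff.2 hf)).emultiplicity_eq_multiplicity,
    sum_congr rfl fun i hi =>
      (FiniteMultiplicity.of_not_isUnit hp.not_isUnit (hf i hi)).emultiplicity_eq_multiplicity] at h
  exact_mod_cast h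

theorem exists_ne_multiplicity_le_of_sum_eq_zero {ι : Type*} [DecidableEq ι] {p : R}
    (hp : Prime p) {s : Finset ι} {T : ι → R} (hT : ∀ i ∈ s, T i ≠ 0) (hsum : ∑ i ∈ s, T i = 0)
    {i₀ : ι} (hi₀ : i₀ ∈ s) (hs : (s.erase i₀).Nonempty) :
    ∃ i ∈ s, i ≠ i₀ ∧ multiplicity p (T i) ≤ multiplicity p (T i₀) := by
  obtain ⟨i, hi, hmin⟩ := exists_min_image (s.erase i₀) (fun i => multiplicity p (T i)) hs
  refine ⟨i, mem_of_mem_erase hi, ne_of_mem_erase hi, ?_⟩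
  refine (FiniteMultiplicity.of_not_isUnit hp.not_isUnit (hT i₀ hi₀)).le_multiplicity_of_pow_dvd ?_
  rw [← add_sum_erase _ _ hi₀, add_eq_zero_iff_eq_neg] at hsum
  exact hsum ▸ (dvd_neg.2 (dvd_sum fun j hj => pow_dvd_of_le_multiplicity (hmin j hj)))

theorem exists_ne_multiplicity_sub_le_of_sum_div_eq_zero {F ι : Type*} [Field F] [Algebra R F]
    [IsFractionRing R F] [DecidableEq ι] {p : R} (hp : Prime p) {s : Finset ι}
    {num den : ι → R} (hnum : ∀ i ∈ s, num i ≠ 0) (hden : ∀ i ∈ s, den i ≠ 0)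
    (hsum : ∑ i ∈ s, algebraMap R F (num i) / algebraMap R F (den i) = 0)
    {i₀ : ι} (hi₀ : i₀ ∈ s) (hs : (s.erase i₀).Nonempty) :
    ∃ i ∈ s, i ≠ i₀ ∧ (multiplicity p (num i) : ℤ) - multiplicity p (den i) ≤
      (multiplicity p (num i₀) : ℤ) - multiplicity p (den i₀) := by
  have hinj := IsFractionRing.injective R F
  set T := fun i => num i * ∏ j ∈ s.erase i, den j
  have hT : ∀ i ∈ s, T i ≠ 0 := fun i hi =>
    mul_ne_zero (hnum i hi) (prod_ne_zero_iff.2 fun j hj => hden j (mem_of_mem_erase hj))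
  have hTsum : ∑ i ∈ s, T i = 0 := by
    refine hinj ?_
    rw [map_zero, map_sum, ← zero_mul (algebraMap R F (∏ j ∈ s, den j)), ← hsum, sum_mul]
    refine sum_congr rfl fun i hi => ?_
    have := (map_ne_zero_iff _ hinj).2 (hden i hi)
    rw [← mul_prod_erase _ _ hi, map_mul, map_mul]
    field_simp
  have hval : ∀ i ∈ s, (multiplicity p (T i) : ℤ) = (multiplicity p (num i) : ℤ) -
      multiplicity p (den i) + ∑ j ∈ s, (multiplicity p (den j) : ℤ) := by
    intro i hi
    have hprod :=
      multiplicity_prod_of_ne_zero hp (s.erase i) fun j hj => hden j (mem_of_mem_erase hj)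
    rw [multiplicity_mul hp (FiniteMultiplicity.of_not_isUnit hp.not_isUnit (hT i hi)), hprod,
      ← add_sum_erase _ _ hi]
    push_cast
    ring
  obtain ⟨i, hi, hne, hle⟩ := exists_ne_multiplicity_le_of_sum_eq_zero hp hT hTsum hi₀ hs
  refine ⟨i, hi, hne, ?_⟩
  have := hval i hi
  have := hval i₀ hi₀
  have : (multiplicity p (T i) : ℤ) ≤ multiplicity p (T i₀) := by exact_mod_cast hle
  omega

end Multiplicity

section ShiftOrd

variable {K : Type*} [Field K]

noncomputable def shiftOrd (q f : K[X]) (m : ℤ) : ℤ := multiplicity (taylor (m : K) q) f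

theorem shiftOrd_nonneg (q f : K[X]) (m : ℤ) : 0 ≤ shiftOrd q f m := Int.natCast_nonneg _

theorem shiftOrd_pos_iff {q f : K[X]} {m : ℤ} : 0 < shiftOrd q f m ↔ taylor (m : K) q ∣ f := by
  rw [shiftOrd, Nat.cast_pos]
  exact ⟨dvd_of_multiplicity_pos, multiplicity_pos_of_dvd⟩

theorem shiftOrd_taylor (q f : K[X]) (c m : ℤ) :
    shiftOrd q (taylor (c : K) f) m = shiftOrd q f (m - c) := by
  rw [shiftOrd, shiftOrd, show ((m : ℤ) : K) = c + ((m - c : ℤ) : K) by push_cast; ring,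
    ← taylor_taylor]
  exact congrArg _ (multiplicity_map_eq (taylorEquiv (c : K)).toMulEquiv)

theorem Irreducible.prime_taylor {q : K[X]} (hq : Irreducible q) (c : K) : Prime (taylor c q) :=
  (hq.map (taylorEquiv c)).prime

theorem shiftOrd_mul {q : K[X]} (hq : Irreducible q) {f g : K[X]} (hf : f ≠ 0) (hg : g ≠ 0)
    (m : ℤ) : shiftOrd q (f * g) m = shiftOrd q f m + shiftOrd q g m := by
  have hp := hq.prime_taylor (m : K)
  rw [shiftOrd, multiplicity_mul hp (FiniteMultiplicity.of_not_isUnit hp.not_isUnit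
    (mul_ne_zero hf hg))]
  push_cast
  rfl

theorem lt_add_of_isCoprime_taylor {q f g : K[X]} (hq : Irreducible q) {c : ℕ}
    (hfg : ∀ h : ℕ, IsCoprime f (taylor ((c : K) + h) g)) {m m' : ℤ}
    (hf : taylor (m : K) q ∣ f) (hg : taylor (m' : K) q ∣ g) : m < m' + c := by
  by_contra! hle
  obtain ⟨h, hh⟩ : ∃ h : ℕ, (h : ℤ) = m - m' - c := ⟨_, Int.toNat_of_nonneg (by omega)⟩
  have hg' : taylor (m : K) q ∣ taylor ((c : K) + h) g := by
    obtain ⟨r, rfl⟩ := hg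
    refine ⟨taylor ((c : K) + h) r, ?_⟩
    rw [taylor_mul, taylor_taylor, show (c : K) + h + m' = m by
      rw [← Int.cast_natCast h, hh]; push_cast; ring]
  exact (hq.map (taylorEquiv (m : K))).not_isUnit ((hfg h).isUnit_of_dvd' hf hg')

theorem finite_setOf_taylor_dvd [CharZero K] {q f : K[X]} (hq : Irreducible q) (hf : f ≠ 0) :
    {m : ℤ | taylor (m : K) q ∣ f}.Finite := by
  obtain ⟨θ, hθ⟩ := IsAlgClosed.exists_aeval_eq_zero (AlgebraicClosure K) q
    (degree_pos_of_irreducible hq).ne'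
  have hroot : ∀ m : ℤ, taylor (m : K) q ∣ f → aeval (θ - m) f = 0 := by
    rintro m ⟨g, rfl⟩
    rw [map_mul, taylor_apply, aeval_comp]
    simp [hθ]
  refine ((finite_setOfPred_isRoot (map_ne_zero hf)).preimage ?_).subset fun m hm =>
    show IsRoot _ (θ - m) by rw [IsRoot, eval_map_algebraMap]; exact hroot m hm
  intro m _ m' _ h
  exact_mod_cast sub_right_injective h

end ShiftOrd

/-- The valuations, at the shifts `q(n+m)` (`m ∈ ℤ`) of an irreducible `q`, of the terms of
`a/b + ∑_{k ∈ s} W(n+1-k) A_k(n-k) / A_J(n-k) = 0`: the term `k = J + 1` stands for `a/b`, and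
`ρ`, `ω`, `α k` are the valuations of `a/b`, `W` and `A_k`. -/
def termVal (J : ℕ) (ρ ω : ℤ → ℤ) (α : ℕ → ℤ → ℤ) (k : ℕ) (m : ℤ) : ℤ :=
  if k = J + 1 then ρ m else ω (m - 1 + k) + α k (m + k) - α J (m + k)

structure OrbitValuations (J : ℕ) (s : Finset ℕ) (ρ ω : ℤ → ℤ) (α : ℕ → ℤ → ℤ) : Prop where
  zero_mem : 0 ∈ s
  self_mem : J ∈ s
  le_of_mem : ∀ k ∈ s, k ≤ J
  α_nonneg : ∀ k m, 0 ≤ α k m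
  bddAbove_ρ : BddAbove {m | ρ m < 0}
  bddAbove_ω : BddAbove {t | ω t < 0}
  bddBelow_ω : BddBelow {t | ω t < 0}
  bddAbove_α : BddAbove {m | 0 < α J m}
  exists_ne_termVal_le : ∀ m, ∀ k₀ ∈ insert (J + 1) s,
    ∃ k ∈ insert (J + 1) s, k ≠ k₀ ∧ termVal J ρ ω α k m ≤ termVal J ρ ω α k₀ m
  lt_of_α_zero_α : ∀ m m', 0 < α 0 m → 0 < α J m' → m < m'
  lt_of_ρ_ρ : ∀ m m', ρ m < 0 → ρ m' < 0 → m < m' + J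
  lt_of_α_zero_ρ : ∀ m m', 0 < α 0 m → ρ m' < 0 → m < m' + J
  lt_of_ρ_α : ∀ m m', ρ m < 0 → 0 < α J m' → m < m'

namespace OrbitValuations

variable {J : ℕ} {s : Finset ℕ} {ρ ω : ℤ → ℤ} {α : ℕ → ℤ → ℤ}

theorem termVal_top (m : ℤ) : termVal J ρ ω α (J + 1) m = ρ m := if_pos rfl

theorem termVal_of_mem (H : OrbitValuations J s ρ ω α) {k : ℕ} (hk : k ∈ s) (m : ℤ) :
    termVal J ρ ω α k m = ω (m - 1 + k) + α k (m + k) - α J (m + k) :=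
  if_neg (by have := H.le_of_mem k hk; omega)

theorem termVal_zero (H : OrbitValuations J s ρ ω α) (m : ℤ) :
    termVal J ρ ω α 0 m = ω (m - 1) + α 0 m - α J m := by
  simpa using H.termVal_of_mem H.zero_mem m

theorem termVal_zero_neg (H : OrbitValuations J s ρ ω α) {k : ℕ} (hk : k ∈ s) {m : ℤ}
    (hV : termVal J ρ ω α k m < 0) (hαJ : 0 < α J (m + k)) :
    termVal J ρ ω α 0 (m + k) < 0 := by
  have hα0 : α 0 (m + k) ≤ 0 := by
    by_contra! h
    exact lt_irrefl _ (H.lt_of_α_zero_α _ _ h hαJ)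
  rw [H.termVal_of_mem hk] at hV
  rw [H.termVal_zero, show m + k - 1 = m - 1 + k by ring]
  have := H.α_nonneg k (m + k)
  omega

theorem exists_ρ_neg (H : OrbitValuations J s ρ ω α) {m₀ : ℤ}
    (hω : ∀ t, m₀ ≤ t → 0 ≤ ω t) (h₀ : termVal J ρ ω α 0 m₀ < 0) :
    ∃ p, m₀ ≤ p ∧ ρ p < 0 ∧ termVal J ρ ω α 0 p < 0 := by
  obtain ⟨bω, hbω⟩ := H.bddAbove_ω
  obtain ⟨bα, hbα⟩ := H.bddAbove_α
  have hbdd : ∃ b, ∀ p, m₀ ≤ p ∧ termVal J ρ ω α 0 p < 0 → p ≤ b := by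
    refine ⟨max (bω + 1) bα, fun p ⟨_, hp⟩ => ?_⟩
    rw [H.termVal_zero] at hp
    have := H.α_nonneg 0 p
    by_cases hωp : ω (p - 1) < 0
    · have := hbω hωp; omega
    · have : p ≤ bα := hbα (show 0 < α J p by omega); omega
  obtain ⟨p, ⟨hp₀, hp⟩, hpmax⟩ := Int.exists_greatest_of_bdd hbdd ⟨m₀, le_rfl, h₀⟩
  obtain ⟨k, hk, hk0, hkp⟩ := H.exists_ne_termVal_le p 0 (mem_insert_of_mem H.zero_mem)
  rcases mem_insert.1 hk with rfl | hks
  · exact ⟨p, hp₀, by simpa [termVal_top] using hkp.trans_lt hp, hp⟩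
  · have hneg := hkp.trans_lt hp
    have hk1 : (1 : ℤ) ≤ k := by exact_mod_cast Nat.one_le_iff_ne_zero.2 hk0
    have hαJ : 0 < α J (p + k) := by
      rw [H.termVal_of_mem hks] at hneg
      have := hω (p - 1 + k) (by omega)
      have := H.α_nonneg k (p + k)
      omega
    have := hpmax (p + k) ⟨by omega, H.termVal_zero_neg hks hneg hαJ⟩
    omega

theorem left_end (H : OrbitValuations J s ρ ω α) {t : ℤ} (ht : ω t < 0)
    (hmin : ∀ t' < t, 0 ≤ ω t') : ρ (t + 1 - J) < 0 ∨ ∃ p ≤ t, 0 < α J p := by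
  have hJ : termVal J ρ ω α J (t + 1 - J) < 0 := by
    rw [H.termVal_of_mem H.self_mem, show t + 1 - J - 1 + J = t by ring]
    omega
  obtain ⟨k, hk, hkJ, hkle⟩ :=
    H.exists_ne_termVal_le (t + 1 - J) J (mem_insert_of_mem H.self_mem)
  rcases mem_insert.1 hk with rfl | hks
  · exact Or.inl (by simpa [termVal_top] using hkle.trans_lt hJ)
  · have hneg := hkle.trans_lt hJ
    rw [H.termVal_of_mem hks] at hneg
    have hkJ' : (k : ℤ) < J := by exact_mod_cast lt_of_le_of_ne (H.le_of_mem k hks) hkJ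
    have := hmin (t + 1 - J - 1 + k) (by omega)
    have := H.α_nonneg k (t + 1 - J + k)
    exact Or.inr ⟨t + 1 - J + k, by omega, by omega⟩

theorem right_end (H : OrbitValuations J s ρ ω α) {t : ℤ} (ht : ω t < 0)
    (hmax : ∀ t', t < t' → 0 ≤ ω t') : 0 < α 0 (t + 1) ∨ ∃ p, t < p ∧ ρ p < 0 := by
  by_cases h : termVal J ρ ω α 0 (t + 1) < 0
  · obtain ⟨p, hp, hρ, -⟩ := H.exists_ρ_neg (fun t' ht' => hmax t' (by omega)) h
    exact Or.inr ⟨p, by omega, hρ⟩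
  · rw [H.termVal_zero, add_sub_cancel_right] at h
    have := H.α_nonneg J (t + 1)
    exact Or.inl (by omega)

/-- Between the leftmost and the rightmost pole of `W` the coprimality conditions leave no room. -/
theorem ω_nonneg (H : OrbitValuations J s ρ ω α) (t : ℤ) : 0 ≤ ω t := by
  by_contra! ht
  obtain ⟨lo, hlo⟩ := H.bddBelow_ω
  obtain ⟨hi, hhi⟩ := H.bddAbove_ω
  obtain ⟨tm, htm, hmin⟩ := Int.exists_least_of_bdd ⟨lo, fun t ht => hlo ht⟩ ⟨t, ht⟩
  obtain ⟨tp, htp, hmax⟩ := Int.exists_greatest_of_bdd ⟨hi, fun t ht => hhi ht⟩ ⟨t, ht⟩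
  have hle : tm ≤ tp := hmin tp htp
  rcases H.left_end htm fun t' ht' => le_of_not_gt fun h => (hmin t' h).not_gt ht'
    with hL | ⟨p, hp, hpα⟩ <;>
  rcases H.right_end htp fun t' ht' => le_of_not_gt fun h => (hmax t' h).not_gt ht'
    with hR | ⟨p', hp', hp'ρ⟩
  · have := H.lt_of_α_zero_ρ _ _ hR hL; omega
  · have := H.lt_of_ρ_ρ _ _ hp'ρ hL; omega
  · have := H.lt_of_α_zero_α _ _ hR hpα; omega
  · have := H.lt_of_ρ_α _ _ hp'ρ hpα; omega

theorem ρ_nonneg (H : OrbitValuations J s ρ ω α) (m : ℤ) : 0 ≤ ρ m := by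
  by_contra! hm
  obtain ⟨k, hk, hkJ, hkle⟩ := H.exists_ne_termVal_le m (J + 1) (mem_insert_self _ _)
  have hks : k ∈ s := (mem_insert.1 hk).resolve_left hkJ
  have hneg : termVal J ρ ω α k m < 0 := by
    have := hkle.trans_eq (termVal_top m); omega
  have hαJ : 0 < α J (m + k) := by
    rw [H.termVal_of_mem hks] at hneg
    have := H.ω_nonneg (m - 1 + k)
    have := H.α_nonneg k (m + k)
    omega
  obtain ⟨p, -, hρ, hp⟩ :=
    H.exists_ρ_neg (fun t _ => H.ω_nonneg t) (H.termVal_zero_neg hks hneg hαJ)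
  rw [H.termVal_zero] at hp
  have := H.ω_nonneg (p - 1)
  have := H.α_nonneg 0 p
  exact lt_irrefl p (H.lt_of_ρ_α p p hρ (by omega))

end OrbitValuations

section Construction

variable {K : Type*} [Field K] {J : ℕ} {A : ℕ → K[X]} {a b u v q : K[X]} {s : Finset ℕ}

local notation "Φ" => algebraMap K[X] (RatFunc K)

/-- Numerators and denominators of the terms of
`a/b + ∑_{k ≤ J} W(n+1-k) A_k(n-k) / A_J(n-k)` for `W = u/v`, the index `J + 1` carrying `a/b`. -/
noncomputable def adjointNum (J : ℕ) (A : ℕ → K[X]) (a u : K[X]) (k : ℕ) : K[X] :=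
  if k = J + 1 then a else taylor ((1 - k : ℤ) : K) u * taylor ((-k : ℤ) : K) (A k)

noncomputable def adjointDen (J : ℕ) (A : ℕ → K[X]) (b v : K[X]) (k : ℕ) : K[X] :=
  if k = J + 1 then b else taylor ((1 - k : ℤ) : K) v * taylor ((-k : ℤ) : K) (A J)

theorem sum_adjointNum_div_adjointDen (hs : ∀ k, k ∈ s ↔ k ≤ J ∧ A k ≠ 0)
    (hid : Φ a / Φ b + ∑ k ∈ range (J + 1),
      Φ (taylor ((1 - k : ℤ) : K) u * taylor ((-k : ℤ) : K) (A k)) /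
        Φ (taylor ((1 - k : ℤ) : K) v * taylor ((-k : ℤ) : K) (A J)) = 0) :
    ∑ k ∈ insert (J + 1) s, Φ (adjointNum J A a u k) / Φ (adjointDen J A b v k) = 0 := by
  rw [sum_insert fun h => by simpa using ((hs _).1 h).1, ← hid]
  congr 1
  · simp [adjointNum, adjointDen]
  rw [sum_subset (fun k hk => mem_range.2 (Nat.lt_succ_of_le ((hs k).1 hk).1))]
  · refine sum_congr rfl fun k hk => ?_
    simp [adjointNum, adjointDen, show k ≠ J + 1 by have := mem_range.1 hk; omega]
  · intro k hk hks
    have hAk : A k = 0 := by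
      by_contra h
      exact hks ((hs k).2 ⟨Nat.le_of_lt_succ (mem_range.1 hk), h⟩)
    simp [adjointNum, show k ≠ J + 1 by have := mem_range.1 hk; omega, hAk]

theorem shiftOrd_adjointNum_sub_adjointDen (hq : Irreducible q) (hu : u ≠ 0) (hv : v ≠ 0)
    (hAJ : A J ≠ 0) {k : ℕ} (hk : k ≤ J) (hAk : A k ≠ 0) (m : ℤ) :
    shiftOrd q (adjointNum J A a u k) m - shiftOrd q (adjointDen J A b v k) m =
      termVal J (fun m => shiftOrd q a m - shiftOrd q b m)
        (fun t => shiftOrd q u t - shiftOrd q v t) (fun k => shiftOrd q (A k)) k m := by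
  have ht : ∀ (c : ℤ) {f : K[X]}, f ≠ 0 → taylor (c : K) f ≠ 0 :=
    fun c f hf => (taylor_eq_zero _ _).not.2 hf
  simp only [adjointNum, adjointDen, termVal, if_neg (show k ≠ J + 1 by omega)]
  rw [shiftOrd_mul hq (ht _ hu) (ht _ hAk), shiftOrd_mul hq (ht _ hv) (ht _ hAJ),
    shiftOrd_taylor, shiftOrd_taylor, shiftOrd_taylor, shiftOrd_taylor,
    show m - (1 - (k : ℤ)) = m - 1 + k by ring, show m - -(k : ℤ) = m + k by ring]
  ring

theorem exists_ne_termVal_le_of_adjoint (hq : Irreducible q) (ha : a ≠ 0) (hb : b ≠ 0)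
    (hu : u ≠ 0) (hv : v ≠ 0) (hAJ : A J ≠ 0) (hs : ∀ k, k ∈ s ↔ k ≤ J ∧ A k ≠ 0)
    (hid : Φ a / Φ b + ∑ k ∈ range (J + 1),
      Φ (taylor ((1 - k : ℤ) : K) u * taylor ((-k : ℤ) : K) (A k)) /
        Φ (taylor ((1 - k : ℤ) : K) v * taylor ((-k : ℤ) : K) (A J)) = 0)
    (m : ℤ) {k₀ : ℕ} (hk₀ : k₀ ∈ insert (J + 1) s) :
    ∃ k ∈ insert (J + 1) s, k ≠ k₀ ∧
      termVal J (fun m => shiftOrd q a m - shiftOrd q b m)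
          (fun t => shiftOrd q u t - shiftOrd q v t) (fun k => shiftOrd q (A k)) k m ≤
        termVal J (fun m => shiftOrd q a m - shiftOrd q b m)
          (fun t => shiftOrd q u t - shiftOrd q v t) (fun k => shiftOrd q (A k)) k₀ m := by
  have ht : ∀ (c : ℤ) {f : K[X]}, f ≠ 0 → taylor (c : K) f ≠ 0 :=
    fun c f hf => (taylor_eq_zero _ _).not.2 hf
  have hnum : ∀ k ∈ insert (J + 1) s, adjointNum J A a u k ≠ 0 := by
    intro k hk
    rcases mem_insert.1 hk with rfl | hk
    · simpa [adjointNum] using ha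
    · have ⟨hkJ, hAk⟩ := (hs k).1 hk
      rw [adjointNum, if_neg (by omega)]
      exact mul_ne_zero (ht _ hu) (ht _ hAk)
  have hden : ∀ k ∈ insert (J + 1) s, adjointDen J A b v k ≠ 0 := by
    intro k hk
    rcases mem_insert.1 hk with rfl | hk
    · simpa [adjointDen] using hb
    · rw [adjointDen, if_neg (by have := ((hs k).1 hk).1; omega)]
      exact mul_ne_zero (ht _ hv) (ht _ hAJ)
  have hval : ∀ k ∈ insert (J + 1) s, shiftOrd q (adjointNum J A a u k) m -
      shiftOrd q (adjointDen J A b v k) m = termVal J (fun m => shiftOrd q a m - shiftOrd q b m)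
        (fun t => shiftOrd q u t - shiftOrd q v t) (fun k => shiftOrd q (A k)) k m := by
    intro k hk
    rcases mem_insert.1 hk with rfl | hk
    · simp [adjointNum, adjointDen, termVal]
    · exact shiftOrd_adjointNum_sub_adjointDen hq hu hv hAJ ((hs k).1 hk).1 ((hs k).1 hk).2 m
  have hne : ((insert (J + 1) s).erase k₀).Nonempty := by
    by_cases h : k₀ = J + 1
    · exact ⟨J, mem_erase.2 ⟨by omega, mem_insert_of_mem ((hs J).2 ⟨le_rfl, hAJ⟩)⟩⟩
    · exact ⟨J + 1, mem_erase.2 ⟨Ne.symm h, mem_insert_self _ _⟩⟩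
  obtain ⟨k, hk, hne, hle⟩ := exists_ne_multiplicity_sub_le_of_sum_div_eq_zero
    (hq.prime_taylor (m : K)) hnum hden (sum_adjointNum_div_adjointDen hs hid) hk₀ hne
  exact ⟨k, hk, hne, by rwa [← hval k hk, ← hval k₀ hk₀]⟩

theorem orbitValuations_of_adjoint [CharZero K] (hq : Irreducible q) (ha : a ≠ 0) (hb : b ≠ 0)
    (hu : u ≠ 0) (hv : v ≠ 0) (hA0 : A 0 ≠ 0) (hAJ : A J ≠ 0) (hs : ∀ k, k ∈ s ↔ k ≤ J ∧ A k ≠ 0)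
    (hid : Φ a / Φ b + ∑ k ∈ range (J + 1),
      Φ (taylor ((1 - k : ℤ) : K) u * taylor ((-k : ℤ) : K) (A k)) /
        Φ (taylor ((1 - k : ℤ) : K) v * taylor ((-k : ℤ) : K) (A J)) = 0)
    (hc1 : ∀ h : ℕ, IsCoprime (A 0) (taylor (h : K) (A J)))
    (hc2 : ∀ h : ℕ, IsCoprime b (taylor ((J : K) + h) b))
    (hc3 : ∀ h : ℕ, IsCoprime (A 0) (taylor ((J : K) + h) b))
    (hc4 : ∀ h : ℕ, IsCoprime b (taylor (h : K) (A J))) :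
    OrbitValuations J s (fun m => shiftOrd q a m - shiftOrd q b m)
      (fun t => shiftOrd q u t - shiftOrd q v t) (fun k => shiftOrd q (A k)) := by
  have hρ : ∀ m, shiftOrd q a m - shiftOrd q b m < 0 → taylor (m : K) q ∣ b := fun m h =>
    shiftOrd_pos_iff.1 (by have := shiftOrd_nonneg q a m; omega)
  have hω : ∀ t, shiftOrd q u t - shiftOrd q v t < 0 → taylor (t : K) q ∣ v := fun t h =>
    shiftOrd_pos_iff.1 (by have := shiftOrd_nonneg q u t; omega)
  have hc1' : ∀ h : ℕ, IsCoprime (A 0) (taylor (((0 : ℕ) : K) + h) (A J)) := by simpa using hc1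
  have hc4' : ∀ h : ℕ, IsCoprime b (taylor (((0 : ℕ) : K) + h) (A J)) := by simpa using hc4
  exact
  { zero_mem := (hs 0).2 ⟨Nat.zero_le _, hA0⟩
    self_mem := (hs J).2 ⟨le_rfl, hAJ⟩
    le_of_mem := fun k hk => ((hs k).1 hk).1
    α_nonneg := fun k m => shiftOrd_nonneg q (A k) m
    bddAbove_ρ := (finite_setOf_taylor_dvd hq hb).bddAbove.mono fun m => hρ m
    bddAbove_ω := (finite_setOf_taylor_dvd hq hv).bddAbove.mono fun t => hω t
    bddBelow_ω := (finite_setOf_taylor_dvd hq hv).bddBelow.mono fun t => hω t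
    bddAbove_α := (finite_setOf_taylor_dvd hq hAJ).bddAbove.mono fun m => shiftOrd_pos_iff.1
    exists_ne_termVal_le := fun m _ hk₀ =>
      exists_ne_termVal_le_of_adjoint hq ha hb hu hv hAJ hs hid m hk₀
    lt_of_α_zero_α := fun m m' h h' => by
      simpa using lt_add_of_isCoprime_taylor hq hc1' (shiftOrd_pos_iff.1 h) (shiftOrd_pos_iff.1 h')
    lt_of_ρ_ρ := fun m m' h h' => lt_add_of_isCoprime_taylor hq hc2 (hρ m h) (hρ m' h')
    lt_of_α_zero_ρ := fun m m' h h' =>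
      lt_add_of_isCoprime_taylor hq hc3 (shiftOrd_pos_iff.1 h) (hρ m' h')
    lt_of_ρ_α := fun m m' h h' => by
      simpa using lt_add_of_isCoprime_taylor hq hc4' (hρ m h) (shiftOrd_pos_iff.1 h') }

end Construction

/-- Let `F` be holonomic of order `J > 0`, annihilated by
`L = ∑_{i=0}^J A_i(n) σ^i` with `A_0(n)·A_J(n) ≠ 0`.  Let `a(n), b(n)` be coprime
polynomials with `(a(n)/b(n))·F(n)` summable.  If for every `h ∈ ℕ` one has
`gcd(A_0(n), A_J(n+h)) = gcd(b(n), b(n+J+h)) = gcd(A_0(n), b(n+J+h)) = gcd(b(n), A_J(n+h)) = 1`,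
then `b(n)` divides `a(n)`. -/
theorem denominator_dvd_numerator {K : Type*} [Field K] [CharZero K]
    (F : ℕ → K) (J : ℕ) (hJ : 0 < J) (A : ℕ → K[X])
    (hord : HasOrder F J) (hann : Annihilates J A F)
    (h0J : A 0 * A J ≠ 0)
    (a b : K[X]) (hb : b ≠ 0) (hab : IsCoprime a b)
    (hsum : IsSummableRat J F a b)
    (hc1 : ∀ h : ℕ, IsCoprime (A 0) ((A J).comp (X + C (h : K))))
    (hc2 : ∀ h : ℕ, IsCoprime b (b.comp (X + C ((J : K) + (h : K)))))
    (hc3 : ∀ h : ℕ, IsCoprime (A 0) (b.comp (X + C ((J : K) + (h : K)))))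
    (hc4 : ∀ h : ℕ, IsCoprime b ((A J).comp (X + C (h : K)))) :
    b ∣ a := by
  rcases eq_or_ne a 0 with rfl | ha
  · exact dvd_zero b
  obtain ⟨J, rfl⟩ : ∃ J', J = J' + 1 := ⟨J - 1, by omega⟩
  obtain ⟨U, hU⟩ := hsum.exists_germ_eq hb
  obtain ⟨u, v, hv, hW⟩ := IsFractionRing.div_surjective (A := K[X]) (U J)
  have hid := add_sum_adjoint_eq_zero hord hann (right_ne_zero_of_mul h0J) hU
  simp only [← hW, RatFunc.shift_div, div_mul_div_comm, ← map_mul] at hid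
  have hu : u ≠ 0 := by
    rintro rfl
    simp [hb] at hid
    exact ha hid
  by_contra hba
  obtain ⟨q, hq, hqb⟩ := WfDvdMonoid.exists_irreducible_factor (fun h => hba h.dvd) hb
  classical
  have H := orbitValuations_of_adjoint (s := (range (J + 2)).filter (A · ≠ 0)) hq ha hb hu
    (nonZeroDivisors.ne_zero hv) (left_ne_zero_of_mul h0J) (right_ne_zero_of_mul h0J)
    (by simp [Nat.lt_succ_iff]) hid (by simpa only [taylor_apply] using hc1)
    (by simpa only [taylor_apply] using hc2) (by simpa only [taylor_apply] using hc3)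
    (by simpa only [taylor_apply] using hc4)
  have hb0 : 0 < shiftOrd q b 0 := shiftOrd_pos_iff.2 (by simpa using hqb)
  have ha0 : ¬ 0 < shiftOrd q a 0 := fun h =>
    hq.not_isUnit (hab.isUnit_of_dvd' (by simpa using shiftOrd_pos_iff.1 h) hqb)
  have := H.ρ_nonneg 0
  omega
end
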